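/- Let g be the Lie algebra of Sol with basis X1,X2,X3, [X1,X2]=X2, [X1,X3]=-X3, [X2,X3]=0, with the Lorentzian inner product whose matrix in this basis is [[λ²,0,0],[0,λ,1],[0,1,0]] with λ≠0. Then the Ricci tensor matrix is diag(0,-2/λ,0) and the scalar curvature is 0. -/

import Mathlib

noncomputable section

/-- The `sol` bracket in the standard basis `(X1,X2,X3)`:
`[X1,X2]=X2`, `[X1,X3]=-X3`, `[X2,X3]=0`. -/
def br (w z : Fin 3 → ℝ) : Fin 3 → ℝ :=
  ![0, w 0 * z 1 - w 1 * z 0, -(w 0 * z 2 - w 2 * z 0)]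

/-- The Lorentzian metric with matrix `[[λ²,0,0],[0,λ,1],[0,1,0]]`. -/
def G (l : ℝ) : Matrix (Fin 3) (Fin 3) ℝ := !![l ^ 2, 0, 0; 0, l, 1; 0, 1, 0]

/-- The corresponding inner product. -/
def ip (l : ℝ) (x y : Fin 3 → ℝ) : ℝ := dotProduct x ((G l).mulVec y)

/-- For `λ ≠ 0`: with the Levi-Civita product `L` given by Koszul's formula,
curvature `K(x,y) = L_{[x,y]} - [L_x,L_y]` and Ricci tensor
`ric(x,y) = tr(w ↦ K(x,w)y)`, the matrix of `ric` is `diag(0, -2/λ, 0)` and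
the scalar curvature `tr(Ric)` is `0`. -/
theorem ricci_sol0b2 (l : ℝ) (hl : l ≠ 0)
    (L : (Fin 3 → ℝ) → (Fin 3 → ℝ) → (Fin 3 → ℝ))
    (hL : ∀ x y z, 2 * ip l (L x y) z =
      ip l (br x y) z + ip l (br z x) y + ip l (br z y) x)
    (K : (Fin 3 → ℝ) → (Fin 3 → ℝ) → (Fin 3 → ℝ) → (Fin 3 → ℝ))
    (hK : ∀ x y z, K x y z = L (br x y) z - L x (L y z) + L y (L x z))
    (ric : (Fin 3 → ℝ) → (Fin 3 → ℝ) → ℝ)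
    (hric : ∀ x y, ric x y = ∑ i : Fin 3, K x (Pi.single i 1) y i) :
    (∀ i j : Fin 3, ric (Pi.single i 1) (Pi.single j 1) =
      Matrix.diagonal ![0, -2 / l, 0] i j) ∧
    (∀ R : Matrix (Fin 3) (Fin 3) ℝ,
      (∀ x y, ip l (R.mulVec x) y = ric x y) → R.trace = 0) := by
  have hl2 : l ^ 2 ≠ 0 := pow_ne_zero _ hl
  have hip : ∀ v w : Fin 3 → ℝ, ip l v w =
      l ^ 2 * v 0 * w 0 + l * v 1 * w 1 + v 1 * w 2 + v 2 * w 1 := by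
    intro v w
    simp [ip, G, Matrix.mulVec, dotProduct, Fin.sum_univ_three,
      Matrix.vecHead, Matrix.vecTail]
    ring
  have hLc : ∀ x y : Fin 3 → ℝ, L x y =
      ![x 1 * y 1 / l, x 0 * y 1, -(l * (x 1 * y 0)) - x 0 * y 2 - l * (x 0 * y 1)] := by
    intro x y
    have h0 := hL x y (Pi.single 0 1)
    have h1 := hL x y (Pi.single 1 1)
    have h2 := hL x y (Pi.single 2 1)
    simp [hip, br, Pi.single_apply] at h0 h1 h2
    funext k
    fin_cases k
    · show L x y 0 = x 1 * y 1 / l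
      rw [eq_div_iff hl]
      apply mul_left_cancel₀ hl
      linear_combination h0 / 2
    · show L x y 1 = x 0 * y 1
      linear_combination h2 / 2
    · show L x y 2 = -(l * (x 1 * y 0)) - x 0 * y 2 - l * (x 0 * y 1)
      linear_combination h1 / 2 - l / 2 * h2
  have hricv : ∀ i j : Fin 3, ric (Pi.single i 1) (Pi.single j 1) =
      Matrix.diagonal ![0, -2 / l, 0] i j := by
    intro i j
    fin_cases i <;> fin_cases j <;>
      simp [hric, hK, hLc, Fin.sum_univ_three, br, Pi.single_apply,
        Matrix.diagonal] <;>
      field_simp <;> ring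
  refine ⟨hricv, ?_⟩
  intro R hR
  have hRe : ∀ j k : Fin 3, ip l (R.mulVec (Pi.single j 1)) (Pi.single k 1) =
      Matrix.diagonal ![0, -2 / l, 0] j k := by
    intro j k
    rw [hR, hricv]
  have hmv : ∀ (j : Fin 3) (i : Fin 3), R.mulVec (Pi.single j 1) i = R i j := by
    intro j i
    simp [Matrix.mulVec, dotProduct, Pi.single_apply, Fin.sum_univ_three]
  have h00 := hRe 0 0
  have h12 := hRe 1 2
  have h22 := hRe 2 2
  have h21 := hRe 2 1
  simp [hip, hmv, Matrix.diagonal] at h00 h12 h22 h21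
  have hr00 : R 0 0 = 0 := h00.resolve_left hl
  simp [Matrix.trace, Matrix.diag, Fin.sum_univ_three, hr00, h12]
  linear_combination h21 - l * h22
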